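/- arXiv:0810.5522 — 3 statements merged into one kernel-verified Lean document; each statement's English description precedes it below -/
import Mathlib

section
/- Let G be a finite simple graph and let u, v be two new vertices added to G, not adjacent to each other, each adjacent to exactly the same subset of vertices of G; call the resulting graph G~. If corank(A(G) + E) = 0 over Z_2, then corank(A(G~) + E) = 0, where E denotes the identity matrix of the appropriate size. -/
open Matrix LaurentPolynomial
open scoped Classical

noncomputable section

def adjMatS {V : Type} (G : SimpleGraph V) (s : Finset V) : Matrix s s (ZMod 2) :=
  fun i j => if G.Adj i.1 j.1 then 1 else 0

def corankS {V : Type} (G : SimpleGraph V) (s : Finset V) : ℕ :=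
  s.card - (adjMatS G s).rank

def adjMat {V : Type} [Fintype V] (G : SimpleGraph V) : Matrix V V (ZMod 2) :=
  fun i j => if G.Adj i j then 1 else 0

def corankM {m : Type} [Fintype m] (M : Matrix m m (ZMod 2)) : ℕ :=
  Fintype.card m - M.rank

def alphaCount {V : Type} [Fintype V] (σ : V → Bool) (s : Finset V) : ℕ :=
  (s.filter (fun i => σ i = false)).card + ((sᶜ).filter (fun i => σ i = true)).card

def bracket {V : Type} [Fintype V] (G : SimpleGraph V) (σ : V → Bool) : LaurentPolynomial ℚ :=
  ∑ s : Finset V, T (2 * (alphaCount σ s : ℤ) - (Fintype.card V : ℤ)) *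
    (-T 2 - T (-2)) ^ (corankS G s)

def lspan (p : LaurentPolynomial ℚ) : ℤ := (WithBot.unbotD 0 p.coeff.support.max) - (WithTop.untopD 0 p.coeff.support.min)

def Bmat {V : Type} [Fintype V] (G : SimpleGraph V) (x : V) : Matrix V V (ZMod 2) :=
  adjMat G + 1 + Matrix.single x x 1

def writhe {V : Type} [Fintype V] (G : SimpleGraph V) (σ : V → Bool) : ℤ :=
  ∑ x, (-1 : ℤ) ^ (corankM (Bmat G x)) * (if σ x then 1 else -1)

def extAdj {V : Type} (G : SimpleGraph V) (N : Set V) : V ⊕ Bool → V ⊕ Bool → Prop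
  | .inl i, .inl j => G.Adj i j
  | .inl i, .inr _ => i ∈ N
  | .inr _, .inl j => j ∈ N
  | .inr _, .inr _ => False

def ext2 {V : Type} (G : SimpleGraph V) (N : Set V) : SimpleGraph (V ⊕ Bool) where
  Adj := extAdj G N
  symm := by
    constructor
    rintro (i|b) (j|c) h
    · exact G.adj_symm h
    · exact h
    · exact h
    · exact h
  loopless := by
    constructor
    rintro (i|b) h
    · exact G.irrefl h
    · exact h

def optExt {V : Type} (G : SimpleGraph V) : SimpleGraph (Option V) where
  Adj x y := match x, y with
    | some i, some j => G.Adj i j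
    | _, _ => False
  symm := by
    constructor
    rintro (_|i) (_|j) h
    · exact h
    · exact h
    · exact h
    · exact G.adj_symm h
  loopless := by
    constructor
    rintro (_|i) h
    · exact h
    · exact G.irrefl h

/-! Writing `c` for the indicator vector of `N`, the matrix `A(G~) + E` is the block matrix
`[[A(G) + E, c, c], [cᵀ, 1, 0], [cᵀ, 0, 1]]`. Its Schur complement with respect to the identity
block is `A(G) + E - 2 c cᵀ = A(G) + E` over `ℤ/2`, so both matrices have the same determinant,
and corank zero means exactly that the determinant is a unit. -/

lemma corankM_eq_zero_iff_isUnit_det {m : Type} [Fintype m] [DecidableEq m] (M : Matrix m m (ZMod 2)) :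
    corankM M = 0 ↔ IsUnit M.det := by
  rw [← isUnit_iff_isUnit_det, ← mulVec_surjective_iff_isUnit, corankM, Nat.sub_eq_zero_iff_le,
    M.rank_le_card_width.ge_iff_eq, Matrix.rank, ← coe_mulVecLin, ← LinearMap.range_eq_top]
  constructor
  · intro h
    exact Submodule.eq_top_of_finrank_eq (by rw [h, Module.finrank_fintype_fun_eq_card])
  · intro h
    rw [h, finrank_top, Module.finrank_fintype_fun_eq_card]

lemma replicateCol_mul_replicateRow_bool {R m n : Type*} [CommRing R] [CharP R 2]
    (u : m → R) (v : n → R) : replicateCol Bool u * replicateRow Bool v = 0 := by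
  ext i j
  simp [mul_apply, replicateCol, replicateRow, CharTwo.two_eq_zero]

lemma det_fromBlocks_replicate_bool_one {R m : Type*} [CommRing R] [CharP R 2] [Fintype m]
    [DecidableEq m] (A : Matrix m m R) (u v : m → R) :
    (fromBlocks A (replicateCol Bool u) (replicateRow Bool v) 1).det = A.det := by
  rw [det_fromBlocks_one₂₂, replicateCol_mul_replicateRow_bool, sub_zero]

lemma adjMat_ext2_add_one {V : Type} [Fintype V] (G : SimpleGraph V) (N : Set V) :
    adjMat (ext2 G N) + 1 =
      fromBlocks (adjMat G + 1) (replicateCol Bool (N.indicator 1))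
        (replicateRow Bool (N.indicator 1)) 1 := by
  ext (i | b) (j | c) <;>
    simp [adjMat, ext2, extAdj, replicateCol, replicateRow, Set.indicator_apply, one_apply] <;>
    congr

lemma det_adjMat_ext2_add_one {V : Type} [Fintype V] (G : SimpleGraph V) (N : Set V) :
    (adjMat (ext2 G N) + 1).det = (adjMat G + 1).det := by
  rw [adjMat_ext2_add_one, det_fromBlocks_replicate_bool_one]

/-- Ω_g2 preserves corank(A+E)=0. -/
theorem corank_AE_ext2 {V : Type} [Fintype V] (G : SimpleGraph V) (N : Set V)
    (h : corankM (adjMat G + 1) = 0) :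
    corankM (adjMat (ext2 G N) + 1) = 0 := by
  rw [corankM_eq_zero_iff_isUnit_det] at h ⊢
  rwa [det_adjMat_ext2_add_one]
end
end

section
/- Let G be an adequate labeled graph on n vertices, i.e., for every state s' at distance 1 from the A-state s_A, corank A(G(s')) + 1 ≤ corank A(G(s_A)) + 1, and there is no such neighbouring state with exactly one more circle than the A-state; and similarly for the B-state. Then span⟨G⟩ = 4n − 4g(G), where g(G) is the atom genus of G. -/
open Matrix LaurentPolynomial
open scoped Classical

noncomputable section

/-!
A state s contributes T^(2α(s) − n) · δ^(c(s)) with δ = −T² − T⁻², whose extreme exponents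
2α(s) − n ± 2c(s) carry the coefficient (−1)^c(s). Toggling one vertex changes the corank of a
principal submatrix by at most one, so adequacy at the A-state gives, by induction on the distance
d to it, c(s) + 1 ≤ c(s_A) + d for every other state s. Since α(s) = n − d, the top exponent
n + 2c(s_A) of the A-state is then reached by no other state and cannot cancel. The bottom exponent
follows by the mirror symmetry σ ↦ ¬σ, which exchanges the A- and B-states and turns ⟨G⟩ into
its image under T ↦ T⁻¹.
-/

open Module Submodule

theorem Submodule.finrank_span_insert_le {K V : Type*} [Field K] [AddCommGroup V] [Module K V]
    [FiniteDimensional K V] (v : V) (s : Set V) :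
    finrank K (span K (insert v s)) ≤ finrank K (span K s) + 1 := by
  rw [span_insert, add_comm]
  calc _ ≤ finrank K (K ∙ v) + finrank K (span K s) := finrank_add_le_finrank_add_finrank _ _
    _ ≤ 1 + finrank K (span K s) := by
      gcongr
      simpa using finrank_span_le_card ({v} : Set V)

namespace Matrix

variable {K : Type*} [Field K] {m m₀ n : Type*} [Fintype m] [Fintype m₀] [Fintype n]

theorem rank_le_rank_submatrix_rows_add_one (A : Matrix m n K) (r : m₀ → m) (x : m)
    (hr : ∀ i ≠ x, i ∈ Set.range r) : A.rank ≤ (A.submatrix r id).rank + 1 := by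
  rw [rank_eq_finrank_span_row, rank_eq_finrank_span_row]
  have hrows : Set.range A ⊆ insert (A x) (Set.range (A.submatrix r id)) := by
    rintro _ ⟨i, rfl⟩
    by_cases hi : i = x
    · exact hi ▸ Set.mem_insert _ _
    · obtain ⟨j, rfl⟩ := hr i hi
      exact Set.mem_insert_of_mem _ ⟨j, rfl⟩
  exact (finrank_mono (span_mono hrows)).trans (finrank_span_insert_le _ _)

theorem rank_le_rank_submatrix_add_two (A : Matrix m m K) (r : m₀ → m) (x : m)
    (hr : ∀ i ≠ x, i ∈ Set.range r) : A.rank ≤ (A.submatrix r r).rank + 2 := by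
  have hcols := rank_le_rank_submatrix_rows_add_one (A.submatrix r id)ᵀ r x hr
  rw [rank_transpose] at hcols
  have hrows := rank_le_rank_submatrix_rows_add_one A r x hr
  rw [← rank_transpose (A.submatrix r r)]
  change _ ≤ ((A.submatrix r id)ᵀ.submatrix r id).rank + 2
  omega

end Matrix

theorem Finset.symmDiff_singleton_of_notMem {α : Type*} [DecidableEq α] {s : Finset α} {x : α}
    (hx : x ∉ s) : symmDiff s {x} = insert x s := by
  ext y
  by_cases hy : y = x <;> simp [Finset.mem_symmDiff, hy, hx]

theorem Finset.symmDiff_singleton_of_mem {α : Type*} [DecidableEq α] {s : Finset α} {x : α}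
    (hx : x ∈ s) : symmDiff s {x} = s.erase x := by
  ext y
  by_cases hy : y = x <;> simp [Finset.mem_symmDiff, hy, hx]

theorem apply_symmDiff_add_one_le {α : Type*} [DecidableEq α] (f : Finset α → ℕ)
    (hf : ∀ s x, f (symmDiff s {x}) ≤ f s + 1) (s₀ : Finset α)
    (h₀ : ∀ x, f (symmDiff s₀ {x}) ≠ f s₀ + 1) {D : Finset α} (hD : D.Nonempty) :
    f (symmDiff s₀ D) + 1 ≤ f s₀ + D.card := by
  induction hD using Finset.Nonempty.cons_induction with
  | singleton x =>
    have := hf s₀ x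
    have := h₀ x
    simp only [Finset.card_singleton]
    omega
  | cons x D hx _ ih =>
    have hstep : symmDiff s₀ (D.cons x hx) = symmDiff (symmDiff s₀ D) {x} := by
      rw [Finset.cons_eq_insert, ← Finset.symmDiff_singleton_of_notMem hx, symmDiff_assoc]
    rw [hstep, Finset.card_cons]
    have := hf (symmDiff s₀ D) x
    omega

section Corank

variable {V : Type} (G : SimpleGraph V)

theorem abs_corankS_insert_sub_le {s : Finset V} {x : V} (hx : x ∉ s) :
    |(corankS G (insert x s) : ℤ) - corankS G s| ≤ 1 := by
  let ι : s → (insert x s : Finset V) := fun i => ⟨i, Finset.mem_insert_of_mem i.2⟩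
  have hsub : adjMatS G s = (adjMatS G (insert x s)).submatrix ι ι := rfl
  have hrange : ∀ i ≠ ⟨x, Finset.mem_insert_self x s⟩, i ∈ Set.range ι := by
    rintro ⟨i, hi⟩ hix
    exact ⟨⟨i, (Finset.mem_insert.mp hi).resolve_left fun h => hix (Subtype.ext h)⟩, rfl⟩
  have hle : (adjMatS G s).rank ≤ (adjMatS G (insert x s)).rank :=
    hsub ▸ Matrix.rank_submatrix_le _ _ _
  have hle_two : (adjMatS G (insert x s)).rank ≤ (adjMatS G s).rank + 2 :=
    hsub ▸ Matrix.rank_le_rank_submatrix_add_two _ ι _ hrange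
  have hs : (adjMatS G s).rank ≤ s.card := by
    simpa using Matrix.rank_le_card_width (adjMatS G s)
  have hxs : (adjMatS G (insert x s)).rank ≤ (insert x s).card := by
    simpa using Matrix.rank_le_card_width (adjMatS G (insert x s))
  rw [Finset.card_insert_of_notMem hx] at hxs
  unfold corankS
  rw [Finset.card_insert_of_notMem hx, abs_le]
  omega

theorem corankS_symmDiff_singleton_le (s : Finset V) (x : V) :
    corankS G (symmDiff s {x}) ≤ corankS G s + 1 := by
  by_cases hx : x ∈ s
  · have h := abs_le.mp (abs_corankS_insert_sub_le G (Finset.notMem_erase x s))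
    rw [Finset.insert_erase hx] at h
    rw [Finset.symmDiff_singleton_of_mem hx]
    omega
  · have h := abs_le.mp (abs_corankS_insert_sub_le G hx)
    rw [Finset.symmDiff_singleton_of_notMem hx]
    omega

theorem corankS_add_one_le_of_adequate (s₀ : Finset V)
    (h₀ : ∀ x, corankS G (symmDiff s₀ {x}) ≠ corankS G s₀ + 1) {s : Finset V} (hs : s ≠ s₀) :
    corankS G s + 1 ≤ corankS G s₀ + (symmDiff s₀ s).card := by
  have hD : (symmDiff s₀ s).Nonempty := by
    rw [Finset.nonempty_iff_ne_empty, Ne, ← Finset.bot_eq_empty, symmDiff_eq_bot]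
    exact Ne.symm hs
  simpa using apply_symmDiff_add_one_le (corankS G) (corankS_symmDiff_singleton_le G) s₀ h₀ hD

end Corank

section StateCount

variable {V : Type} [Fintype V] (σ : V → Bool)

theorem alphaCount_add_alphaCount_not (s : Finset V) :
    alphaCount σ s + alphaCount (fun i => !σ i) s = Fintype.card V := by
  have hs := Finset.card_filter_add_card_filter_not (s := s) (fun i => σ i = false)
  have hsc := Finset.card_filter_add_card_filter_not (s := sᶜ) (fun i => σ i = true)
  have := Finset.card_add_card_compl s
  simp only [Bool.not_eq_false, Bool.not_eq_true] at hs hsc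
  simp only [alphaCount, Bool.not_eq_false', Bool.not_eq_true']
  omega

theorem alphaCount_not_eq_card_symmDiff (s : Finset V) :
    alphaCount (fun i => !σ i) s =
      (symmDiff (Finset.univ.filter (fun i => σ i = false)) s).card := by
  rw [Finset.symmDiff_def, Finset.card_union_of_disjoint disjoint_sdiff_sdiff, add_comm]
  simp only [alphaCount, Bool.not_eq_false', Bool.not_eq_true']
  congr 2 <;> ext i <;> simp [and_comm]

end StateCount

section Laurent

open LaurentPolynomial

local notation "δ" => -T 2 - T (-2)

variable {R : Type*} [CommRing R]

theorem LaurentPolynomial.coeff_T_mul (D e : ℤ) (p : R[T;T⁻¹]) :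
    (T D * p).coeff e = p.coeff (e - D) := by
  rw [T, AddMonoidAlgebra.coeff_single_mul_apply, one_mul, neg_add_eq_sub]

theorem coeff_delta_pow (c : ℕ) :
    ((δ : R[T;T⁻¹]) ^ c).coeff (2 * c) = (-1) ^ c ∧
      ∀ e, 2 * (c : ℤ) < e → ((δ : R[T;T⁻¹]) ^ c).coeff e = 0 := by
  induction c with
  | zero =>
    refine ⟨by simp, fun e he => ?_⟩
    simp only [CharP.cast_eq_zero, mul_zero] at he
    simp [← T_zero, T_apply, he.ne]
  | succ c ih =>
    have hcoeff : ∀ e, ((δ : R[T;T⁻¹]) ^ (c + 1)).coeff e =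
        -((δ : R[T;T⁻¹]) ^ c).coeff (e - 2) - ((δ : R[T;T⁻¹]) ^ c).coeff (e + 2) := by
      intro e
      rw [pow_succ', sub_mul, neg_mul, AddMonoidAlgebra.coeff_sub, AddMonoidAlgebra.coeff_neg,
        Finsupp.sub_apply, Finsupp.neg_apply, coeff_T_mul, coeff_T_mul, sub_neg_eq_add]
    refine ⟨?_, fun e he => ?_⟩
    · rw [hcoeff, show 2 * ((c + 1 : ℕ) : ℤ) - 2 = 2 * c by push_cast; ring, ih.1,
        ih.2 (2 * ((c + 1 : ℕ) : ℤ) + 2) (by push_cast; omega)]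
      ring
    · rw [hcoeff, ih.2 _ (by push_cast at he; omega), ih.2 _ (by push_cast at he; omega)]
      simp

theorem coeff_sum_T_mul_delta_pow {ι : Type*} (S : Finset ι) (D : ι → ℤ) (c : ι → ℕ) {i₀ : ι}
    (hi₀ : i₀ ∈ S) (htop : ∀ i ∈ S, i ≠ i₀ → D i + 2 * c i < D i₀ + 2 * c i₀) :
    (∑ i ∈ S, T (D i) * (δ : R[T;T⁻¹]) ^ c i).coeff (D i₀ + 2 * c i₀) = (-1) ^ c i₀ ∧
      ∀ e, D i₀ + 2 * c i₀ < e → (∑ i ∈ S, T (D i) * (δ : R[T;T⁻¹]) ^ c i).coeff e = 0 := by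
  simp only [AddMonoidAlgebra.coeff_sum, Finset.sum_apply', coeff_T_mul]
  refine ⟨?_, fun e he => Finset.sum_eq_zero fun i hi => (coeff_delta_pow _).2 _ ?_⟩
  · rw [Finset.sum_eq_single_of_mem i₀ hi₀ fun i hi hne => (coeff_delta_pow _).2 _ ?_]
    · simpa using (coeff_delta_pow (c i₀)).1
    · linarith [htop i hi hne]
  · by_cases hne : i = i₀
    · subst hne; linarith
    · linarith [htop i hi hne]

end Laurent

theorem lspan_eq_sub {p : LaurentPolynomial ℚ} {a b : ℤ} (ha : p.coeff a ≠ 0)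
    (hgt : ∀ e, a < e → p.coeff e = 0) (hb : p.coeff b ≠ 0) (hlt : ∀ e, e < b → p.coeff e = 0) :
    lspan p = a - b := by
  have hmax : p.coeff.support.max = a :=
    le_antisymm (Finset.max_le fun e he => WithBot.coe_le_coe.mpr <|
        not_lt.mp fun h => Finsupp.mem_support_iff.mp he (hgt e h))
      (Finset.le_max (Finsupp.mem_support_iff.mpr ha))
  have hmin : p.coeff.support.min = b :=
    le_antisymm (Finset.min_le (Finsupp.mem_support_iff.mpr hb))
      (Finset.le_min fun e he => WithTop.coe_le_coe.mpr <|
        not_lt.mp fun h => Finsupp.mem_support_iff.mp he (hlt e h))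
  rw [lspan, hmax, hmin, WithBot.unbotD_coe, WithTop.untopD_coe]

section Bracket

variable {V : Type} [Fintype V] (G : SimpleGraph V) (σ : V → Bool)

theorem bracket_not : bracket G (fun i => !σ i) = invert (bracket G σ) := by
  simp only [bracket, map_sum, map_mul, map_pow, map_sub, map_neg, invert_T, neg_neg]
  refine Finset.sum_congr rfl fun s _ => ?_
  have hα := alphaCount_add_alphaCount_not σ s
  rw [show -T (-2) - T 2 = (-T 2 - T (-2) : LaurentPolynomial ℚ) by ring]
  congr 2
  omega

theorem coeff_bracket_top
    (hA : ∀ x : V, corankS G (symmDiff (Finset.univ.filter (fun i => σ i = false)) {x}) ≠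
      corankS G (Finset.univ.filter (fun i => σ i = false)) + 1) :
    (bracket G σ).coeff
        (Fintype.card V + 2 * corankS G (Finset.univ.filter (fun i => σ i = false))) ≠ 0 ∧
      ∀ e, Fintype.card V + 2 * (corankS G (Finset.univ.filter (fun i => σ i = false)) : ℤ) < e →
        (bracket G σ).coeff e = 0 := by
  set sA := Finset.univ.filter (fun i => σ i = false)
  have hα : ∀ s, alphaCount σ s + (symmDiff sA s).card = Fintype.card V := fun s => by
    rw [← alphaCount_not_eq_card_symmDiff, alphaCount_add_alphaCount_not]
  have hαA : alphaCount σ sA = Fintype.card V := by simpa using hα sA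
  obtain ⟨htop, hzero⟩ := coeff_sum_T_mul_delta_pow (R := ℚ) Finset.univ
    (fun s => 2 * (alphaCount σ s : ℤ) - Fintype.card V) (corankS G) (Finset.mem_univ sA)
    fun s _ hs => by
      have := corankS_add_one_le_of_adequate G sA hA hs
      have := hα s
      omega
  simp only [hαA] at htop hzero
  refine ⟨?_, fun e he => hzero e (by omega)⟩
  rw [show (Fintype.card V : ℤ) + 2 * corankS G sA =
    2 * (Fintype.card V : ℤ) - Fintype.card V + 2 * corankS G sA by ring]
  exact htop ▸ pow_ne_zero _ (neg_ne_zero.mpr one_ne_zero)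

end Bracket

/-- 4n − 4g(G) = 2n + 2(k − 1) + 2(l − 1), where k − 1 and l − 1 are the coranks of the A- and
B-states. -/
theorem span_adequate {V : Type} [Fintype V] (G : SimpleGraph V) (σ : V → Bool)
    (hA : ∀ x : V, corankS G (symmDiff (Finset.univ.filter (fun i => σ i = false)) {x}) ≠
      corankS G (Finset.univ.filter (fun i => σ i = false)) + 1)
    (hB : ∀ x : V, corankS G (symmDiff (Finset.univ.filter (fun i => σ i = true)) {x}) ≠
      corankS G (Finset.univ.filter (fun i => σ i = true)) + 1) :
    lspan (bracket G σ) = 2 * (Fintype.card V : ℤ) +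
      2 * (corankS G (Finset.univ.filter (fun i => σ i = false)) : ℤ) +
      2 * (corankS G (Finset.univ.filter (fun i => σ i = true)) : ℤ) := by
  obtain ⟨htop, hgt⟩ := coeff_bracket_top G σ hA
  obtain ⟨hbot, hlt⟩ := coeff_bracket_top G (fun i => !σ i) (by simpa using hB)
  simp only [Bool.not_eq_false', bracket_not, invert_apply] at hbot hlt
  rw [lspan_eq_sub htop hgt hbot fun e he => by simpa using hlt (-e) (by omega)]
  ring
end
end

section
/- Let G be a labeled graph with corank(A(G)+E) = 0, and for each vertex v_i define w_i = (−1)^{corank(A(G)+E+E_{ii})} · sign(v_i) and the writhe w(G) = Σ_i w_i. Define the Jones polynomial X(G) = (−a)^{−3 w(G)} ⟨G⟩. If G~ is obtained from G by adding an isolated vertex with either label, then X(G~) = X(G). -/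
/-!
Split the states of the enlarged graph `G~ = G + v` according to whether they contain the
new vertex `v`. Since `v` is isolated, `A(G~(s ∪ {v}))` is `A(G(s))` bordered by a zero row
and column, so its corank is one larger, while `α` moves by one according to the label of
`v`. The two terms belonging to `s` therefore combine through the loop value
`δ = -a² - a⁻²` into `(-a)^{∓3}` times the term of `s` in `⟨G⟩`.

For the writhe, `A(G~) + E + E_ii` is `A(G) + E + E_ii` bordered by the entry `1` when
`i ≠ v`, and `A(G) + E` bordered by `1 + 1 = 0` when `i = v`. The old `w_i` are unchanged and
`w_v = -sign(v)` because `corank(A(G) + E) = 0`, so the factor `(-a)^{-3w}` absorbs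
`(-a)^{∓3}`.
-/

open Matrix LaurentPolynomial
open scoped Classical

noncomputable section

/-- The Jones polynomial X(G) = (-a)^{-3w(G)}⟨G⟩, with (-a)^m written as
(-1)^m · a^m. -/
def jones {V : Type} [Fintype V] (G : SimpleGraph V) (σ : V → Bool) :
    LaurentPolynomial ℚ :=
  C ((-1 : ℚ) ^ (-3 * writhe G σ)) * T (-3 * writhe G σ) * bracket G σ

theorem Submodule.finrank_prod {K M N : Type*} [DivisionRing K] [AddCommGroup M] [AddCommGroup N]
    [Module K M] [Module K N] (p : Submodule K M) (q : Submodule K N)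
    [FiniteDimensional K p] [FiniteDimensional K q] :
    Module.finrank K (p.prod q) = Module.finrank K p + Module.finrank K q := by
  have hrange : LinearMap.range (p.subtype.prodMap q.subtype) = p.prod q := by
    rw [LinearMap.range_prodMap, Submodule.range_subtype, Submodule.range_subtype]
  rw [← hrange, LinearMap.finrank_range_of_inj
    (Prod.map_injective.2 ⟨p.injective_subtype, q.injective_subtype⟩), Module.finrank_prod]

namespace Matrix

theorem rank_fromBlocks_zero_zero {K m₁ m₂ n₁ n₂ : Type*} [Field K] [Fintype n₁]
    [Fintype n₂] (A : Matrix m₁ n₁ K) (D : Matrix m₂ n₂ K) :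
    (fromBlocks A 0 0 D).rank = A.rank + D.rank := by
  have hconj : (fromBlocks A 0 0 D).mulVecLin =
      (LinearEquiv.sumArrowLequivProdArrow m₁ m₂ K K).symm.toLinearMap ∘ₗ
        A.mulVecLin.prodMap D.mulVecLin ∘ₗ
          (LinearEquiv.sumArrowLequivProdArrow n₁ n₂ K K).toLinearMap := by
    refine LinearMap.ext fun v => funext fun i => ?_
    cases i <;> simp [fromBlocks_mulVec] <;> rfl
  rw [rank, hconj, LinearMap.range_comp, LinearMap.range_comp, LinearEquiv.range,
    Submodule.map_top, LinearEquiv.finrank_map_eq, LinearMap.range_prodMap,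
    Submodule.finrank_prod]
  rfl

theorem rank_of_const_unit {K : Type*} [Field K] (c : K) :
    (of fun _ _ => c : Matrix Unit Unit K).rank = if c = 0 then 0 else 1 := by
  split_ifs with hc
  · rw [hc, ← rank_zero (R := K) (m := Unit) (n := Unit)]
    rfl
  · rw [rank_of_isUnit _ ((isUnit_iff_isUnit_det _).2 (by simpa [det_unique] using hc)),
      Fintype.card_unit]

theorem rank_option_of_isolated {K n : Type*} [Field K] [Fintype n]
    (M : Matrix (Option n) (Option n) K) (hrow : ∀ j, M none (some j) = 0)
    (hcol : ∀ i, M (some i) none = 0) :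
    M.rank = (M.submatrix some some).rank + if M none none = 0 then 0 else 1 := by
  set e := (Equiv.optionEquivSumPUnit n).symm
  have hblocks :
      M.submatrix e e = fromBlocks (M.submatrix some some) 0 0 (of fun _ _ => M none none) := by
    ext (i | i) (j | j) <;> simp [e, hrow, hcol]
  rw [← rank_submatrix M e e, hblocks, rank_fromBlocks_zero_zero, rank_of_const_unit]

end Matrix

theorem corankM_submatrix {m n : Type} [Fintype m] [Fintype n] (M : Matrix m m (ZMod 2))
    (e : n ≃ m) : corankM (M.submatrix e e) = corankM M := by
  rw [corankM, corankM, rank_submatrix, Fintype.card_congr e]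

theorem corankM_option_of_isolated {n : Type} [Fintype n]
    (M : Matrix (Option n) (Option n) (ZMod 2)) (hrow : ∀ j, M none (some j) = 0)
    (hcol : ∀ i, M (some i) none = 0) :
    corankM M = corankM (M.submatrix some some) + if M none none = 0 then 1 else 0 := by
  have hle := rank_le_card_height (M.submatrix some some)
  rw [corankM, corankM, rank_option_of_isolated M hrow hcol, Fintype.card_option]
  split_ifs <;> omega

theorem corankS_eq_corankM {V : Type} (G : SimpleGraph V) (s : Finset V) :
    corankS G s = corankM (adjMatS G s) := by
  rw [corankS, corankM, Fintype.card_coe]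

def Finset.optionEquivInsertNone {α : Type*} (s : Finset α) : Option s ≃ s.insertNone where
  toFun o := ⟨o.map (↑), by cases o <;> simp⟩
  invFun
    | ⟨none, _⟩ => none
    | ⟨some a, h⟩ => some ⟨a, Finset.some_mem_insertNone.1 h⟩
  left_inv := by rintro (_ | _) <;> rfl
  right_inv := by rintro ⟨_ | _, _⟩ <;> rfl

def Finset.sumEquivFinsetOption (α : Type*) : Finset α ⊕ Finset α ≃ Finset (Option α) where
  toFun := Sum.elim (Finset.map .some) insertNone
  invFun t := if none ∈ t then .inr t.eraseNone else .inl t.eraseNone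
  left_inv := by
    rintro (s | s)
    · simp [Finset.eraseNone_map_some]
    · simp [Finset.eraseNone_insertNone]
  right_inv t := by
    by_cases h : none ∈ t
    · ext (_ | a) <;> simp [h]
    · simp [h, Finset.map_some_eraseNone]

theorem Fintype.sum_finset_option {α M : Type*} [Fintype α] [AddCommMonoid M]
    (f : Finset (Option α) → M) :
    ∑ t, f t = ∑ s : Finset α, f (s.map .some) + ∑ s : Finset α, f s.insertNone := by
  rw [← (Finset.sumEquivFinsetOption α).sum_comp, Fintype.sum_sum_type]
  rfl

def labelSign (b : Bool) : ℤ := if b then 1 else -1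

def negTPow (m : ℤ) : LaurentPolynomial ℚ := C ((-1 : ℚ) ^ m) * T m

theorem negTPow_add (m n : ℤ) : negTPow (m + n) = negTPow m * negTPow n := by
  rw [negTPow, negTPow, negTPow, zpow_add₀ (by norm_num), map_mul, T_add]
  ring

theorem T_add_labelSign_add_T_sub_labelSign_mul (m : ℤ) (b : Bool) :
    T (m + labelSign b) + T (m - labelSign b) * (-T 2 - T (-2)) =
      negTPow (-3 * labelSign b) * T m := by
  cases b <;>
  · simp only [labelSign, negTPow, Bool.false_eq_true, if_true, if_false]
    rw [mul_sub, mul_neg, ← T_add, ← T_add, mul_assoc, ← T_add]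
    norm_num
    ring_nf

section IsolatedVertex

variable {V : Type} (G : SimpleGraph V)

@[simp] theorem optExt_adj_some_some (i j : V) : (optExt G).Adj (some i) (some j) ↔ G.Adj i j :=
  Iff.rfl

@[simp] theorem optExt_not_adj_none_left (y : Option V) : ¬ (optExt G).Adj none y := by
  cases y <;> exact id

@[simp] theorem optExt_not_adj_none_right (x : Option V) : ¬ (optExt G).Adj x none := by
  cases x <;> exact id

theorem corankS_optExt_map_some (s : Finset V) :
    corankS (optExt G) (s.map .some) = corankS G s := by
  have hsub : (adjMatS (optExt G) (s.map .some)).submatrix (s.equivMap .some) (s.equivMap .some) =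
      adjMatS G s := rfl
  rw [corankS_eq_corankM, corankS_eq_corankM, ← hsub, corankM_submatrix]

theorem corankS_optExt_insertNone (s : Finset V) :
    corankS (optExt G) s.insertNone = corankS G s + 1 := by
  set e := s.optionEquivInsertNone
  have hsome : ((adjMatS (optExt G) s.insertNone).submatrix e e).submatrix some some =
      adjMatS G s := rfl
  rw [corankS_eq_corankM, corankS_eq_corankM, ← corankM_submatrix _ e,
    corankM_option_of_isolated _ (fun _ => by simp [e, Finset.optionEquivInsertNone, adjMatS])
      (fun _ => by simp [e, Finset.optionEquivInsertNone, adjMatS]), hsome]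
  simp [e, Finset.optionEquivInsertNone, adjMatS]

variable [Fintype V]

theorem corankM_Bmat_optExt_some (x : V) :
    corankM (Bmat (optExt G) (some x)) = corankM (Bmat G x) := by
  have hsome : (Bmat (optExt G) (some x)).submatrix some some = Bmat G x := by
    ext i j
    simp [Bmat, adjMat, one_apply, single_apply]
  rw [corankM_option_of_isolated _ (fun _ => by simp [Bmat, adjMat])
    (fun _ => by simp [Bmat, adjMat]), hsome]
  simp [Bmat, adjMat]

theorem corankM_Bmat_optExt_none :
    corankM (Bmat (optExt G) none) = corankM (adjMat G + 1) + 1 := by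
  have hsome : (Bmat (optExt G) none).submatrix some some = adjMat G + 1 := by
    ext i j
    simp [Bmat, adjMat, one_apply]
  have hnone : Bmat (optExt G) none none none = 0 := by
    simp [Bmat, adjMat]
    rfl
  rw [corankM_option_of_isolated _ (fun _ => by simp [Bmat, adjMat])
    (fun _ => by simp [Bmat, adjMat]), hsome, if_pos hnone]

theorem writhe_optExt (σ : V → Bool) (b : Bool) (h : corankM (adjMat G + 1) = 0) :
    writhe (optExt G) (fun x => x.elim b σ) = writhe G σ - labelSign b := by
  rw [writhe, Fintype.sum_option, corankM_Bmat_optExt_none, h]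
  simp only [corankM_Bmat_optExt_some]
  change _ + writhe G σ = _
  cases b <;> simp [labelSign, sub_eq_neg_add]

end IsolatedVertex

section Bracket

variable {V : Type} [Fintype V]

theorem alphaCount_eq_sum (σ : V → Bool) (s : Finset V) :
    alphaCount σ s = ∑ i, if (i ∈ s ↔ σ i = false) then 1 else 0 := by
  rw [alphaCount, Finset.card_filter, Finset.card_filter, ← Finset.sum_add_sum_compl s]
  congr 1 <;> refine Finset.sum_congr rfl fun i hi => ?_
  · simp [hi]
  · simp_all

theorem alphaCount_optExt (σ : V → Bool) (b : Bool) (t : Finset (Option V)) :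
    alphaCount (fun x => x.elim b σ) t =
      alphaCount σ t.eraseNone + if (none ∈ t ↔ b = false) then 1 else 0 := by
  rw [alphaCount_eq_sum, alphaCount_eq_sum, Fintype.sum_option, add_comm]
  congr! 3 with i
  simp

theorem two_mul_alphaCount_optExt_sub_card (σ : V → Bool) (b : Bool) (t : Finset (Option V)) :
    2 * (alphaCount (fun x => x.elim b σ) t : ℤ) - Fintype.card (Option V) =
      2 * (alphaCount σ t.eraseNone : ℤ) - Fintype.card V +
        (if none ∈ t then -1 else 1) * labelSign b := by
  rw [alphaCount_optExt, Fintype.card_option]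
  by_cases h : none ∈ t <;> cases b <;> simp [h, labelSign] <;> ring

theorem bracket_optExt (G : SimpleGraph V) (σ : V → Bool) (b : Bool) :
    bracket (optExt G) (fun x => x.elim b σ) = negTPow (-3 * labelSign b) * bracket G σ := by
  rw [bracket, Fintype.sum_finset_option, ← Finset.sum_add_distrib, bracket, Finset.mul_sum]
  refine Finset.sum_congr rfl fun s _ => ?_
  simp only [two_mul_alphaCount_optExt_sub_card, corankS_optExt_map_some,
    corankS_optExt_insertNone, Finset.eraseNone_map_some, Finset.eraseNone_insertNone,
    Finset.none_mem_insertNone, if_true, Finset.mem_map, Function.Embedding.some_apply,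
    reduceCtorEq, and_false, exists_false, if_false, one_mul, neg_one_mul, ← sub_eq_add_neg,
    pow_succ]
  linear_combination (-T 2 - T (-2) : LaurentPolynomial ℚ) ^ corankS G s *
    T_add_labelSign_add_T_sub_labelSign_mul (2 * (alphaCount σ s : ℤ) - Fintype.card V) b

end Bracket

theorem jones_eq_negTPow_mul_bracket {V : Type} [Fintype V] (G : SimpleGraph V) (σ : V → Bool) :
    jones G σ = negTPow (-3 * writhe G σ) * bracket G σ := rfl

/-- The Jones polynomial is invariant under adding an isolated vertex with
either label (Ω_g1). -/
theorem jones_isolated_vertex {V : Type} [Fintype V] (G : SimpleGraph V)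
    (σ : V → Bool) (b : Bool) (h : corankM (adjMat G + 1) = 0) :
    jones (optExt G) (fun x => x.elim b σ) = jones G σ := by
  rw [jones_eq_negTPow_mul_bracket, jones_eq_negTPow_mul_bracket, writhe_optExt G σ b h,
    bracket_optExt, ← mul_assoc, ← negTPow_add]
  congr 2
  ring
end
end
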